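/- Let G be an (even-hole, pyramid)-free graph of maximum degree at most 4, let H be a hole of G, and let v be a vertex not on H that is major with respect to H (i.e., the neighbors of v on H are not all contained in a 3-vertex subpath of H). Then v has exactly three neighbors on H, and these three neighbors are pairwise non-adjacent. -/

import Mathlib

/-!
Number the vertices of the hole `c` cyclically and look at the neighbours of `x` in that order.
Between two consecutive neighbours the hole runs along an odd number of edges: otherwise this
stretch of the hole and `x` form an even hole (the stretches whose ends are adjacent on `c`, which
do not close up into a hole, are excluded because `x` is major). These stretches add up to the
whole hole, whose length is odd, so `x` has an odd number of neighbours on `c`. Being major, it has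
at least two, and it has at most four, hence exactly three. If two of them, `u` and `w`, were
adjacent, the third one `z` would be adjacent to neither (else all three lie on a subpath with three
vertices), and `z` would be the apex of a pyramid with triangle `x u w`.
-/

def IsPyramid {V : Type} (G : SimpleGraph V) : Prop :=
  ∃ (x a b c : V) (p1 : G.Walk x a) (p2 : G.Walk x b) (p3 : G.Walk x c),
    p1.IsPath ∧ p2.IsPath ∧ p3.IsPath ∧
    1 ≤ p1.length ∧ 1 ≤ p2.length ∧ 1 ≤ p3.length ∧
    ((2 ≤ p1.length ∧ 2 ≤ p2.length) ∨ (2 ≤ p1.length ∧ 2 ≤ p3.length) ∨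
      (2 ≤ p2.length ∧ 2 ≤ p3.length)) ∧
    (∀ w, w ∈ p1.support → w ∈ p2.support → w = x) ∧
    (∀ w, w ∈ p1.support → w ∈ p3.support → w = x) ∧
    (∀ w, w ∈ p2.support → w ∈ p3.support → w = x) ∧
    (∀ w, w ∈ p1.support ∨ w ∈ p2.support ∨ w ∈ p3.support) ∧
    G.Adj a b ∧ G.Adj b c ∧ G.Adj a c ∧
    (∀ u w, G.Adj u w ↔ s(u, w) ∈ p1.edges ∨ s(u, w) ∈ p2.edges ∨ s(u, w) ∈ p3.edges ∨
      s(u, w) = s(a, b) ∨ s(u, w) = s(b, c) ∨ s(u, w) = s(a, c))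

def PyramidFree {V : Type} (G : SimpleGraph V) : Prop :=
  ¬ ∃ S : Set V, IsPyramid (G.induce S)

def IsHoleCycle {V : Type} (G : SimpleGraph V) {v : V} (c : G.Walk v v) : Prop :=
  c.IsCycle ∧ 4 ≤ c.length ∧
    ∀ u w, u ∈ c.support → w ∈ c.support → G.Adj u w → s(u, w) ∈ c.edges

def HasEvenHole {V : Type} (G : SimpleGraph V) : Prop :=
  ∃ (v : V) (c : G.Walk v v), IsHoleCycle G c ∧ Even c.length

theorem Nat.ModEq.eq_of_le_of_lt_add {m a b k : ℕ} (h : a ≡ b [MOD m]) (ha : k ≤ a) (hb : k ≤ b)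
    (ha' : a < k + m) (hb' : b < k + m) : a = b :=
  h.eq_of_abs_lt (abs_sub_lt_iff.2 ⟨by omega, by omega⟩)

open Finset in
theorem Nat.card_filter_Ioc_mod_two_of_odd_gaps {P : ℕ → Prop} [DecidablePred P] (h0 : P 0)
    (n : ℕ) (hn : P n)
    (hgap : ∀ a b, a < b → b ≤ n → P a → P b → (∀ j, a < j → j < b → ¬ P j) → Odd (b - a)) :
    #{j ∈ Ioc 0 n | P j} % 2 = n % 2 := by
  induction n using Nat.strong_induction_on with
  | _ n ih =>
  rcases Nat.eq_zero_or_pos n with rfl | hpos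
  · simp
  set a := Nat.findGreatest P (n - 1)
  have ha : P a := Nat.findGreatest_spec (Nat.zero_le _) h0
  have han : a < n := (Nat.findGreatest_le _).trans_lt (by omega)
  have hbetween : ∀ j, a < j → j < n → ¬ P j :=
    fun j h1 h2 => Nat.findGreatest_is_greatest h1 (by omega)
  have hsplit : {j ∈ Ioc 0 n | P j} = insert n {j ∈ Ioc 0 a | P j} := by
    ext j
    simp only [mem_filter, mem_Ioc, mem_insert]
    constructor
    · rintro ⟨⟨h1, h2⟩, hj⟩
      rcases h2.lt_or_eq with h2 | rfl
      · exact .inr ⟨⟨h1, not_lt.1 fun h => hbetween j h h2 hj⟩, hj⟩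
      · exact .inl rfl
    · rintro (rfl | ⟨⟨h1, h2⟩, hj⟩)
      · exact ⟨⟨hpos, le_rfl⟩, hn⟩
      · exact ⟨⟨h1, by omega⟩, hj⟩
  have hnotin : n ∉ {j ∈ Ioc 0 a | P j} := by simp; omega
  have iha := ih a han ha fun b c hbc hc => hgap b c hbc (by omega)
  obtain ⟨t, ht⟩ := hgap a n han le_rfl ha hn hbetween
  rw [hsplit, card_insert_of_notMem hnotin]
  omega

open Finset in
theorem Finset.exists_third_of_card_eq_three {α : Type} [DecidableEq α] {s : Finset α}
    (hs : #s = 3) {a b : α} (ha : a ∈ s) (hb : b ∈ s) (hab : a ≠ b) :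
    ∃ c ∈ s, c ≠ a ∧ c ≠ b ∧ ∀ d ∈ s, d = a ∨ d = b ∨ d = c := by
  have hcard : #((s.erase a).erase b) = 1 := by
    rw [card_erase_of_mem (mem_erase.2 ⟨hab.symm, hb⟩), card_erase_of_mem ha, hs]
  obtain ⟨c, hc⟩ := card_eq_one.1 hcard
  have hcmem : c ∈ (s.erase a).erase b := hc ▸ mem_singleton_self c
  simp only [mem_erase] at hcmem
  refine ⟨c, hcmem.2.2, hcmem.2.1, hcmem.1, fun d hd => ?_⟩
  by_contra! h
  have : d ∈ (s.erase a).erase b := by simp [hd, h.1, h.2.1]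
  rw [hc, mem_singleton] at this
  exact h.2.2 this

namespace SimpleGraph.Walk

variable {V : Type} {G : SimpleGraph V}

section OfFun

def ofFun (f : ℕ → V) : (n : ℕ) → (∀ i < n, G.Adj (f i) (f (i + 1))) → G.Walk (f 0) (f n)
  | 0, _ => nil
  | n + 1, h => (ofFun f n fun i hi => h i (by omega)).concat (h n (by omega))

variable {f : ℕ → V} {n : ℕ} {h : ∀ i < n, G.Adj (f i) (f (i + 1))}

@[simp]
theorem length_ofFun : (ofFun f n h).length = n := by
  induction n with
  | zero => rfl
  | succ n ih => simp [ofFun, ih]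

theorem support_ofFun : (ofFun f n h).support = (List.range (n + 1)).map f := by
  induction n with
  | zero => rfl
  | succ n ih => simp [ofFun, ih, List.range_succ (n := n + 1)]

theorem edges_ofFun : (ofFun f n h).edges = (List.range n).map fun i => s(f i, f (i + 1)) := by
  induction n with
  | zero => rfl
  | succ n ih => simp [ofFun, ih, List.range_succ]

theorem mem_support_ofFun {u : V} : u ∈ (ofFun f n h).support ↔ ∃ i ≤ n, f i = u := by
  simp [support_ofFun]

theorem mem_edges_ofFun {e : Sym2 V} :
    e ∈ (ofFun f n h).edges ↔ ∃ i < n, s(f i, f (i + 1)) = e := by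
  simp [edges_ofFun]

theorem isPath_ofFun (hf : Set.InjOn f (Set.Iic n)) : (ofFun f n h).IsPath := by
  rw [isPath_def, support_ofFun]
  exact List.nodup_range.map_on fun i hi j hj => hf (by simpa [Nat.lt_succ_iff] using hi)
    (by simpa [Nat.lt_succ_iff] using hj)

theorem isChordless_ofFun (hf : ∀ i ≤ n, ∀ j ≤ n, G.Adj (f i) (f j) → j = i + 1 ∨ i = j + 1) :
    (ofFun f n h).IsChordless := by
  rw [isChordless_iff_forall_mem_edges]
  simp only [mem_support_ofFun, mem_edges_ofFun]
  rintro _ _ ⟨i, hi, rfl⟩ ⟨j, hj, rfl⟩ hadj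
  rcases hf i hi j hj hadj with rfl | rfl
  · exact ⟨i, by omega, rfl⟩
  · exact ⟨j, by omega, Sym2.eq_swap⟩

end OfFun

section Induce

variable {s : Set V} {u w : V} {p : G.Walk u w} {hp : ∀ y ∈ p.support, y ∈ s}

@[simp]
theorem length_induce : (p.induce s hp).length = p.length :=
  (length_map _ _).symm.trans (congrArg length (map_induce p hp))

@[simp]
theorem mem_support_induce {y : s} : y ∈ (p.induce s hp).support ↔ (y : V) ∈ p.support := by
  rw [support_induce, List.mem_attachWith]

@[simp]
theorem mk_mem_edges_induce {y z : s} :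
    s(y, z) ∈ (p.induce s hp).edges ↔ s((y : V), (z : V)) ∈ p.edges := by
  have : p.edges = (p.induce s hp).edges.map (Sym2.map Subtype.val) :=
    (congrArg edges (map_induce p hp)).symm.trans (edges_map _ _)
  rw [this]
  exact (List.mem_map_of_injective (Sym2.map.injective Subtype.val_injective)).symm

theorem IsPath.induce (h : p.IsPath) : (p.induce s hp).IsPath :=
  IsPath.of_map (f := (Embedding.induce s).toHom) (by rwa [map_induce])

end Induce

theorem isHoleCycle_cons_concat {u w x : V} {p : G.Walk u w} (hp : p.IsPath)
    (hpc : p.IsChordless) (hlen : 2 ≤ p.length) (hx : x ∉ p.support) (hxu : G.Adj x u)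
    (hwx : G.Adj w x) (hN : ∀ y ∈ p.support, G.Adj x y → y = u ∨ y = w) :
    IsHoleCycle G (cons hxu (p.concat hwx)) := by
  have huw : u ≠ w := by
    rintro rfl
    simp [(isPath_iff_nil.1 hp).length_eq_zero] at hlen
  refine ⟨?_, by simp; omega, ?_⟩
  · rw [cons_isCycle_iff, edges_concat]
    refine ⟨hp.concat hx hwx, fun h => ?_⟩
    simp only [List.concat_eq_append, List.mem_append, List.mem_singleton, Sym2.eq_iff] at h
    rcases h with h | ⟨rfl, -⟩ | ⟨-, rfl⟩
    · exact hx (fst_mem_support_of_mem_edges p h)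
    · exact hx p.end_mem_support
    · exact huw rfl
  · have hxy : ∀ y ∈ p.support, G.Adj x y → s(x, y) ∈ (cons hxu (p.concat hwx)).edges := by
      intro y hy hxy
      rcases hN y hy hxy with rfl | rfl <;> simp [edges_concat, Sym2.eq_swap]
    have hmem : ∀ y ∈ (cons hxu (p.concat hwx)).support, y = x ∨ y ∈ p.support := by
      intro y hy
      simp only [support_cons, support_concat, List.mem_cons, List.mem_append] at hy
      tauto
    intro y z hy hz hyz
    rcases hmem y hy with rfl | hy' <;> rcases hmem z hz with rfl | hz'
    · exact (hyz.ne rfl).elim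
    · exact hxy z hz' hyz
    · exact Sym2.eq_swap ▸ hxy y hy' hyz.symm
    · simp [edges_concat, hpc.mem_edges hy' hz' hyz]

section CycVert

variable {v : V}

def cycVert (c : G.Walk v v) (k : ℕ) : V := c.getVert (k % c.length)

variable {c : G.Walk v v} {i j k : ℕ}

@[simp]
theorem cycVert_add_length : c.cycVert (k + c.length) = c.cycVert k := by
  simp [cycVert]

theorem cycVert_mem_support : c.cycVert k ∈ c.support := c.getVert_mem_support _

theorem cycVert_eq_of_modEq (h : i ≡ j [MOD c.length]) : c.cycVert i = c.cycVert j := by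
  rw [cycVert, cycVert, show i % c.length = j % c.length from h]

theorem getVert_eq_cycVert (hk : k ≤ c.length) : c.getVert k = c.cycVert k := by
  rcases hk.lt_or_eq with hk | rfl
  · rw [cycVert, Nat.mod_eq_of_lt hk]
  · simp [cycVert]

theorem exists_cycVert_eq (hL : 0 < c.length) {u : V} (hu : u ∈ c.support) :
    ∃ k < c.length, c.cycVert k = u := by
  obtain ⟨k, rfl, hk⟩ := mem_support_iff_exists_getVert.1 hu
  exact ⟨k % c.length, Nat.mod_lt _ hL, by simp [cycVert, getVert_eq_cycVert hk]⟩

theorem exists_cycVert_add_eq (hL : 0 < c.length) (k : ℕ) {u : V} (hu : u ∈ c.support) :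
    ∃ j < c.length, c.cycVert (k + j) = u := by
  obtain ⟨m, hm, rfl⟩ := exists_cycVert_eq hL hu
  have hr := Nat.mod_lt k hL
  refine ⟨(m + c.length - k % c.length) % c.length, Nat.mod_lt _ hL, cycVert_eq_of_modEq ?_⟩
  calc k + (m + c.length - k % c.length) % c.length
      ≡ k % c.length + (m + c.length - k % c.length) [MOD c.length] :=
        (Nat.mod_modEq k _).symm.add (Nat.mod_modEq _ _)
    _ = m + c.length := by omega
    _ ≡ m [MOD c.length] := Nat.add_modEq_right

theorem adj_cycVert_succ (hL : 0 < c.length) (k : ℕ) :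
    G.Adj (c.cycVert k) (c.cycVert (k + 1)) := by
  have hk := Nat.mod_lt k hL
  have hsucc : c.cycVert (k + 1) = c.getVert (k % c.length + 1) := by
    rw [getVert_eq_cycVert (by omega), cycVert, cycVert, Nat.mod_add_mod]
  rw [hsucc, cycVert]
  exact c.adj_getVert_succ hk

theorem IsCycle.cycVert_eq_cycVert_iff (hc : c.IsCycle) :
    c.cycVert i = c.cycVert j ↔ i ≡ j [MOD c.length] := by
  have h3 := hc.three_le_length
  refine ⟨fun h => hc.getVert_injOn' ?_ ?_ h, cycVert_eq_of_modEq⟩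
  · simp only [Set.mem_ofPred_eq]; have := Nat.mod_lt i (by omega : 0 < c.length); omega
  · simp only [Set.mem_ofPred_eq]; have := Nat.mod_lt j (by omega : 0 < c.length); omega

theorem IsCycle.eq_of_cycVert_eq (hc : c.IsCycle) (h : c.cycVert i = c.cycVert j) (hi : k ≤ i)
    (hj : k ≤ j) (hi' : i < k + c.length) (hj' : j < k + c.length) : i = j :=
  (hc.cycVert_eq_cycVert_iff.1 h).eq_of_le_of_lt_add hi hj hi' hj'

theorem IsCycle.exists_mk_cycVert_eq_of_mem_edges (hc : c.IsCycle) (k : ℕ) {y y' : V}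
    (h : s(y, y') ∈ c.edges) :
    ∃ i < c.length, s(c.cycVert (k + i), c.cycVert (k + i + 1)) = s(y, y') := by
  have hL0 : 0 < c.length := by have := hc.three_le_length; omega
  obtain ⟨m, hm, he⟩ := (mk_mem_edges_iff_exists c).1 h
  obtain ⟨i, hi, hieq⟩ := exists_cycVert_add_eq hL0 k (c.getVert_mem_support m)
  rw [getVert_eq_cycVert hm.le] at hieq
  refine ⟨i, hi, ?_⟩
  rw [← he, getVert_eq_cycVert hm.le, getVert_eq_cycVert hm, hieq,
    cycVert_eq_of_modEq ((hc.cycVert_eq_cycVert_iff.1 hieq).add_right 1)]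

end CycVert

section Arc

variable {v : V}

def arc (c : G.Walk v v) (hL : 0 < c.length) (k n : ℕ) :
    G.Walk (c.cycVert k) (c.cycVert (k + n)) :=
  ofFun (fun i => c.cycVert (k + i)) n fun i _ => adj_cycVert_succ hL (k + i)

variable {c : G.Walk v v} {hL : 0 < c.length} {k n : ℕ}

@[simp]
theorem length_arc : (c.arc hL k n).length = n := length_ofFun

theorem mem_support_arc {u : V} :
    u ∈ (c.arc hL k n).support ↔ ∃ i ≤ n, c.cycVert (k + i) = u :=
  mem_support_ofFun

theorem mem_edges_arc {e : Sym2 V} :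
    e ∈ (c.arc hL k n).edges ↔ ∃ i < n, s(c.cycVert (k + i), c.cycVert (k + i + 1)) = e :=
  mem_edges_ofFun

theorem support_arc_subset {u : V} (hu : u ∈ (c.arc hL k n).support) : u ∈ c.support := by
  obtain ⟨i, -, rfl⟩ := mem_support_arc.1 hu
  exact cycVert_mem_support

theorem IsCycle.isPath_arc (hcyc : c.IsCycle) (hn : n < c.length) : (c.arc hL k n).IsPath :=
  isPath_ofFun fun i hi j hj h => by
    have := hcyc.eq_of_cycVert_eq h (k := k) (by omega) (by omega)
      (by simp at hi; omega) (by simp at hj; omega)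
    omega

theorem IsCycle.eq_cycVert_of_mem_support_arc (hcyc : c.IsCycle) {p : ℕ} (hp : p < c.length)
    {y : V} (h1 : y ∈ (c.arc hL k p).support)
    (h2 : y ∈ (c.arc hL (k + (p + 1)) (c.length - (p + 1))).support) : y = c.cycVert k := by
  obtain ⟨i, hi, rfl⟩ := mem_support_arc.1 h1
  obtain ⟨j, hj, hij⟩ := mem_support_arc.1 h2
  rcases hj.lt_or_eq with hj | rfl
  · have := hcyc.eq_of_cycVert_eq hij (k := k) (by omega) (by omega) (by omega) (by omega)
    omega
  · rw [← hij, show k + (p + 1) + (c.length - (p + 1)) = k + c.length by omega,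
      cycVert_add_length]

theorem mk_cycVert_mem_edges_arc_or {p i : ℕ} (hi : i < c.length) :
    s(c.cycVert (k + i), c.cycVert (k + i + 1)) ∈ (c.arc hL k p).edges ∨ i = p ∨
      s(c.cycVert (k + i), c.cycVert (k + i + 1)) ∈
        (c.arc hL (k + (p + 1)) (c.length - (p + 1))).edges := by
  rcases lt_trichotomy i p with h | rfl | h
  · exact .inl (mem_edges_arc.2 ⟨i, h, rfl⟩)
  · exact .inr (.inl rfl)
  · refine .inr (.inr (mem_edges_arc.2 ⟨i - (p + 1), by omega, ?_⟩))
    rw [show k + (p + 1) + (i - (p + 1)) = k + i by omega]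

end Arc

def IsMajor {v : V} (c : G.Walk v v) (x : V) : Prop :=
  ¬ ∃ u1 u2 u3 : V, s(u1, u2) ∈ c.edges ∧ s(u2, u3) ∈ c.edges ∧ u1 ≠ u3 ∧
    ∀ u, u ∈ c.support → G.Adj x u → (u = u1 ∨ u = u2 ∨ u = u3)

end SimpleGraph.Walk

open SimpleGraph Walk in
theorem not_pyramidFree_of_paths {V : Type} {G : SimpleGraph V} {x a b c : V} {p1 : G.Walk x a}
    {p2 : G.Walk x b} {p3 : G.Walk x c} (hp1 : p1.IsPath) (hp2 : p2.IsPath) (hp3 : p3.IsPath)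
    (hl1 : 1 ≤ p1.length) (hl2 : 1 ≤ p2.length) (hl3 : 1 ≤ p3.length)
    (hl : (2 ≤ p1.length ∧ 2 ≤ p2.length) ∨ (2 ≤ p1.length ∧ 2 ≤ p3.length) ∨
      (2 ≤ p2.length ∧ 2 ≤ p3.length))
    (h12 : ∀ w, w ∈ p1.support → w ∈ p2.support → w = x)
    (h13 : ∀ w, w ∈ p1.support → w ∈ p3.support → w = x)
    (h23 : ∀ w, w ∈ p2.support → w ∈ p3.support → w = x)
    (hab : G.Adj a b) (hbc : G.Adj b c) (hac : G.Adj a c)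
    (hind : ∀ u w, (u ∈ p1.support ∨ u ∈ p2.support ∨ u ∈ p3.support) →
      (w ∈ p1.support ∨ w ∈ p2.support ∨ w ∈ p3.support) → G.Adj u w →
      s(u, w) ∈ p1.edges ∨ s(u, w) ∈ p2.edges ∨ s(u, w) ∈ p3.edges ∨
        s(u, w) = s(a, b) ∨ s(u, w) = s(b, c) ∨ s(u, w) = s(a, c)) :
    ¬ PyramidFree G := by
  set S : Set V := {w | w ∈ p1.support ∨ w ∈ p2.support ∨ w ∈ p3.support}
  have hS1 : ∀ w ∈ p1.support, w ∈ S := fun w h => .inl h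
  have hS2 : ∀ w ∈ p2.support, w ∈ S := fun w h => .inr (.inl h)
  have hS3 : ∀ w ∈ p3.support, w ∈ S := fun w h => .inr (.inr h)
  refine fun hPyr => hPyr ⟨S, _, _, _, _, p1.induce S hS1, p2.induce S hS2, p3.induce S hS3,
    hp1.induce, hp2.induce, hp3.induce, ?_⟩
  simp only [length_induce, mem_support_induce, Subtype.forall, Subtype.ext_iff, comap_adj,
    Function.Embedding.subtype_apply, Sym2.eq_iff, mk_mem_edges_induce]
  refine ⟨hl1, hl2, hl3, hl, fun w _ => h12 w, fun w _ => h13 w, fun w _ => h23 w,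
    fun w hw => hw, hab, hbc, hac, fun u hu w hw => ?_⟩
  refine ⟨fun h => by simpa only [Sym2.eq_iff] using hind u w hu hw h, ?_⟩
  rintro (h | h | h | h | h | h)
  · exact p1.adj_of_mem_edges h
  · exact p2.adj_of_mem_edges h
  · exact p3.adj_of_mem_edges h
  all_goals rcases h with ⟨rfl, rfl⟩ | ⟨rfl, rfl⟩ <;> first | assumption | exact Adj.symm ‹_›

namespace IsHoleCycle

open SimpleGraph Walk Finset

variable {V : Type} {G : SimpleGraph V} {v x : V} {c : G.Walk v v} {i j : ℕ}

theorem isCycle (hc : IsHoleCycle G c) : c.IsCycle := hc.1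

theorem four_le_length (hc : IsHoleCycle G c) : 4 ≤ c.length := hc.2.1

theorem isChordless (hc : IsHoleCycle G c) : c.IsChordless :=
  isChordless_iff_forall_mem_edges.2 fun _ _ => hc.2.2 _ _

theorem adj_cycVert_iff (hc : IsHoleCycle G c) :
    G.Adj (c.cycVert i) (c.cycVert j) ↔ j ≡ i + 1 [MOD c.length] ∨ i ≡ j + 1 [MOD c.length] := by
  have hL0 : 0 < c.length := by have := hc.four_le_length; omega
  refine ⟨fun h => ?_, ?_⟩
  · obtain ⟨m, hm, he⟩ := (mk_mem_edges_iff_exists c).1 <|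
      hc.isChordless.mem_edges cycVert_mem_support cycVert_mem_support h
    rw [getVert_eq_cycVert hm.le, getVert_eq_cycVert hm, Sym2.eq_iff,
      hc.isCycle.cycVert_eq_cycVert_iff, hc.isCycle.cycVert_eq_cycVert_iff,
      hc.isCycle.cycVert_eq_cycVert_iff, hc.isCycle.cycVert_eq_cycVert_iff] at he
    rcases he with ⟨h1, h2⟩ | ⟨h1, h2⟩
    · exact .inl (h2.symm.trans (h1.add_right 1))
    · exact .inr (h2.symm.trans (h1.add_right 1))
  · rintro (h | h)
    · rw [cycVert_eq_of_modEq h]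
      exact adj_cycVert_succ hL0 i
    · rw [cycVert_eq_of_modEq h]
      exact (adj_cycVert_succ hL0 j).symm

theorem eq_add_one_of_adj_cycVert (hc : IsHoleCycle G c) (h : G.Adj (c.cycVert i) (c.cycVert j))
    (hij : i ≤ j) (hj : j < i + c.length) : j = i + 1 ∨ j + 1 = i + c.length := by
  have := hc.four_le_length
  rcases hc.adj_cycVert_iff.1 h with h | h
  · exact .inl (h.eq_of_le_of_lt_add hij (by omega) hj (by omega))
  · exact .inr ((Nat.add_modEq_right.trans h).eq_of_le_of_lt_add (k := i + 1) (by omega)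
      (by omega) (by omega) (by omega)).symm

theorem mk_cycVert_mem_edges (hc : IsHoleCycle G c) (k : ℕ) :
    s(c.cycVert k, c.cycVert (k + 1)) ∈ c.edges :=
  hc.isChordless.mem_edges cycVert_mem_support cycVert_mem_support
    (adj_cycVert_succ (by have := hc.four_le_length; omega) k)

theorem isChordless_arc (hc : IsHoleCycle G c) {hL : 0 < c.length} {k n : ℕ}
    (hn : n + 2 ≤ c.length) : (c.arc hL k n).IsChordless := by
  refine isChordless_ofFun fun i hi j hj h => ?_
  rcases le_total i j with hij | hij
  · have := hc.eq_add_one_of_adj_cycVert h (by omega) (by omega)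
    omega
  · have := hc.eq_add_one_of_adj_cycVert h.symm (by omega) (by omega)
    omega

theorem exists_adj_cycVert_of_isMajor (hc : IsHoleCycle G c) (hm : c.IsMajor x) (k : ℕ) :
    ∃ j, 3 ≤ j ∧ j < c.length ∧ G.Adj x (c.cycVert (k + j)) := by
  have hL := hc.four_le_length
  by_contra! h
  refine hm ⟨c.cycVert k, c.cycVert (k + 1), c.cycVert (k + 2), hc.mk_cycVert_mem_edges k,
    hc.mk_cycVert_mem_edges (k + 1), fun he => ?_, fun u hu hxu => ?_⟩
  · have := hc.isCycle.eq_of_cycVert_eq he (k := k) (by omega) (by omega) (by omega) (by omega)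
    omega
  · obtain ⟨j, hj, rfl⟩ := exists_cycVert_add_eq (by omega) k hu
    have : j < 3 := by
      by_contra hj3
      exact h j (by omega) hj hxu
    interval_cases j <;> simp

theorem odd_sub_of_consecutive_adj (hEH : ¬ HasEvenHole G) (hc : IsHoleCycle G c)
    (hx : x ∉ c.support) (hm : c.IsMajor x) {a b : ℕ} (hab : a < b) (hb : b ≤ a + c.length)
    (hxa : G.Adj x (c.cycVert a)) (hxb : G.Adj x (c.cycVert b))
    (hbetween : ∀ j, a < j → j < b → ¬ G.Adj x (c.cycVert j)) : Odd (b - a) := by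
  have hL := hc.four_le_length
  by_cases hb1 : b = a + 1
  · simp [hb1]
  by_cases hbL : a + c.length ≤ b + 1
  · obtain ⟨j, hj3, hjL, hxj⟩ := hc.exists_adj_cycVert_of_isMajor hm b
    refine absurd ?_ (hbetween (b + j - c.length) (by omega) (by omega))
    rwa [← cycVert_add_length, show b + j - c.length + c.length = b + j by omega]
  -- The arc of `c` from `a` to `b` closes up with `x` into a hole of length `b - a + 2`.
  have hL0 : 0 < c.length := by omega
  have hxb' : G.Adj (c.cycVert (a + (b - a))) x := by
    rw [show a + (b - a) = b by omega]
    exact hxb.symm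
  have hp : (c.arc hL0 a (b - a)).IsPath := hc.isCycle.isPath_arc (by omega)
  have hpc : (c.arc hL0 a (b - a)).IsChordless := hc.isChordless_arc (by omega)
  have hhole : IsHoleCycle G (cons hxa ((c.arc hL0 a (b - a)).concat hxb')) := by
    refine isHoleCycle_cons_concat hp hpc (by rw [length_arc]; omega)
      (fun h => hx (support_arc_subset h)) hxa hxb' ?_
    intro y hy hxy
    obtain ⟨i, hi, rfl⟩ := mem_support_arc.1 hy
    rcases Nat.eq_zero_or_pos i with rfl | hi0
    · exact .inl rfl
    rcases hi.lt_or_eq with hi' | rfl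
    · exact absurd hxy (hbetween (a + i) (by omega) (by omega))
    · exact .inr rfl
  by_contra hodd
  apply hEH ⟨x, _, hhole, ?_⟩
  simpa [Nat.even_add_one] using hodd

theorem odd_card_neighbors [DecidableEq V] [DecidableRel G.Adj] (hEH : ¬ HasEvenHole G)
    (hc : IsHoleCycle G c) (hx : x ∉ c.support) (hm : c.IsMajor x) :
    Odd #{u ∈ c.support.toFinset | G.Adj x u} := by
  have hL := hc.four_le_length
  have hL0 : 0 < c.length := by omega
  obtain ⟨k, -, -, hxk⟩ := hc.exists_adj_cycVert_of_isMajor hm 0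
  rw [zero_add] at hxk
  have hpar := Nat.card_filter_Ioc_mod_two_of_odd_gaps
    (P := fun i => G.Adj x (c.cycVert (k + i))) hxk c.length (by simpa [← add_assoc] using hxk)
    fun a b hab hb ha hb' hbetween => by
      have := hc.odd_sub_of_consecutive_adj hEH hx hm (a := k + a) (b := k + b) (by omega)
        (by omega) ha hb' fun j h1 h2 => by
          have := hbetween (j - k) (by omega) (by omega)
          rwa [show k + (j - k) = j by omega] at this
      rwa [Nat.add_sub_add_left] at this
  have hcard : #{i ∈ Ioc 0 c.length | G.Adj x (c.cycVert (k + i))} =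
      #{u ∈ c.support.toFinset | G.Adj x u} := by
    refine card_bij (fun i _ => c.cycVert (k + i)) ?_ ?_ ?_
    · intro i hi
      simp only [mem_filter, List.mem_toFinset] at hi ⊢
      exact ⟨cycVert_mem_support, hi.2⟩
    · intro i hi j hj h
      simp only [mem_filter, mem_Ioc] at hi hj
      have := hc.isCycle.eq_of_cycVert_eq h (k := k + 1) (by omega) (by omega) (by omega)
        (by omega)
      omega
    · intro u hu
      simp only [mem_filter, List.mem_toFinset] at hu
      obtain ⟨j, hj, rfl⟩ := exists_cycVert_add_eq hL0 k hu.1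
      rcases Nat.eq_zero_or_pos j with rfl | hj0
      · exact ⟨c.length, by simpa [← add_assoc, hL0] using hu.2, by simp⟩
      · exact ⟨j, by simpa [hj0, hj.le] using hu.2, rfl⟩
  have hodd : Odd c.length := Nat.not_even_iff_odd.1 fun h => hEH ⟨v, c, hc, h⟩
  rw [Nat.odd_iff] at hodd ⊢
  omega

theorem one_lt_card_neighbors [DecidableEq V] [DecidableRel G.Adj] (hc : IsHoleCycle G c)
    (hm : c.IsMajor x) : 1 < #{u ∈ c.support.toFinset | G.Adj x u} := by
  obtain ⟨i, hi3, hiL, hxi⟩ := hc.exists_adj_cycVert_of_isMajor hm 0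
  rw [zero_add] at hxi
  obtain ⟨j, hj3, hjL, hxj⟩ := hc.exists_adj_cycVert_of_isMajor hm i
  refine one_lt_card.2 ⟨c.cycVert i, ?_, c.cycVert (i + j), ?_, fun h => ?_⟩
  · simpa using ⟨cycVert_mem_support, hxi⟩
  · simpa using ⟨cycVert_mem_support, hxj⟩
  · have := hc.isCycle.eq_of_cycVert_eq h (k := i) (by omega) (by omega) (by omega) (by omega)
    omega

theorem card_neighbors_eq_three [Fintype V] [DecidableEq V] [DecidableRel G.Adj]
    (hdeg : G.degree x ≤ 4) (hEH : ¬ HasEvenHole G) (hc : IsHoleCycle G c) (hx : x ∉ c.support)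
    (hm : c.IsMajor x) : #{u ∈ c.support.toFinset | G.Adj x u} = 3 := by
  have hodd := hc.odd_card_neighbors hEH hx hm
  have hgt := hc.one_lt_card_neighbors hm
  have hle : #{u ∈ c.support.toFinset | G.Adj x u} ≤ 4 :=
    (card_le_card fun u hu => by simpa using (mem_filter.1 hu).2).trans
      (G.card_neighborFinset_eq_degree x ▸ hdeg)
  rw [Nat.odd_iff] at hodd
  omega

/-- The pyramid has apex `c.cycVert k`, triangle `x u w` with `u = c.cycVert (k + p)` and
`w = c.cycVert (k + p + 1)`, and as paths the two arcs of the hole from the apex to `u` and to `w`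
and the edge from the apex to `x`. -/
theorem not_pyramidFree_of_adj_cycVert (hc : IsHoleCycle G c) (hx : x ∉ c.support) {k p : ℕ}
    (hp2 : 2 ≤ p) (hpL : p + 3 ≤ c.length) (hxz : G.Adj x (c.cycVert k))
    (hxu : G.Adj x (c.cycVert (k + p))) (hxw : G.Adj x (c.cycVert (k + (p + 1))))
    (hN : ∀ y ∈ c.support, G.Adj x y →
      y = c.cycVert k ∨ y = c.cycVert (k + p) ∨ y = c.cycVert (k + (p + 1))) :
    ¬ PyramidFree G := by
  have hL0 : 0 < c.length := by omega
  have hend : c.cycVert (k + (p + 1) + (c.length - (p + 1))) = c.cycVert k := by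
    rw [show k + (p + 1) + (c.length - (p + 1)) = k + c.length by omega, cycVert_add_length]
  set P1 := c.arc hL0 k p
  set P2' := c.arc hL0 (k + (p + 1)) (c.length - (p + 1))
  set P2 := P2'.reverse.copy hend rfl
  set P3 := hxz.symm.toWalk
  have hP2 {y : V} : y ∈ P2.support ↔ y ∈ P2'.support := by simp [P2]
  have hP3 {y : V} : y ∈ P3.support ↔ y = c.cycVert k ∨ y = x := by simp [P3]
  have hS {y : V} (hy : y ∈ P1.support ∨ y ∈ P2.support ∨ y ∈ P3.support) :
      y = x ∨ y ∈ c.support := by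
    rcases hy with hy | hy | hy
    · exact .inr (support_arc_subset hy)
    · exact .inr (support_arc_subset (hP2.1 hy))
    · rcases hP3.1 hy with rfl | rfl
      exacts [.inr cycVert_mem_support, .inl rfl]
  refine not_pyramidFree_of_paths (p1 := P1) (p2 := P2) (p3 := P3)
    (hc.isCycle.isPath_arc (by omega))
    (by simpa [P2] using (hc.isCycle.isPath_arc (hL := hL0) (k := k + (p + 1))
      (n := c.length - (p + 1)) (by omega)).reverse) hxz.symm.isPath_toWalk
    (by simp [P1]; omega) (by simp [P2, P2']; omega) (by simp [P3]) (.inl ⟨by simp [P1]; omega,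
      by simp [P2, P2']; omega⟩)
    (fun y hy1 hy2 => hc.isCycle.eq_cycVert_of_mem_support_arc (by omega) hy1 (hP2.1 hy2))
    (fun y hy1 hy3 => (hP3.1 hy3).resolve_right fun h => hx (h ▸ support_arc_subset hy1))
    (fun y hy2 hy3 => (hP3.1 hy3).resolve_right fun h => hx (h ▸ support_arc_subset (hP2.1 hy2)))
    (adj_cycVert_succ hL0 (k + p)) hxw.symm hxu.symm fun y y' hy hy' hyy' => ?_
  rcases hS hy with rfl | hyc <;> rcases hS hy' with rfl | hy'c
  · exact (hyy'.ne rfl).elim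
  · rcases hN y' hy'c hyy' with rfl | rfl | rfl <;> simp [P3, Sym2.eq_swap]
  · rcases hN y hyc hyy'.symm with rfl | rfl | rfl <;> simp [P3, Sym2.eq_swap]
  · obtain ⟨i, hi, he⟩ := hc.isCycle.exists_mk_cycVert_eq_of_mem_edges k
      (hc.isChordless.mem_edges hyc hy'c hyy')
    rw [← he]
    rcases mk_cycVert_mem_edges_arc_or (hL := hL0) (k := k) (p := p) hi with h | rfl | h
    exacts [.inl h, .inr (.inr (.inr (.inl rfl))), .inr (.inl (by simpa [P2] using h))]

theorem not_pyramidFree_of_adj_neighbors (hc : IsHoleCycle G c) (hx : x ∉ c.support)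
    {z u w : V} (hz : z ∈ c.support) (hu : u ∈ c.support) (hw : w ∈ c.support)
    (hxz : G.Adj x z) (hxu : G.Adj x u) (hxw : G.Adj x w) (huw : G.Adj u w)
    (hzu : z ≠ u) (hzw : z ≠ w) (hzu' : ¬ G.Adj z u) (hzw' : ¬ G.Adj z w)
    (hN : ∀ y ∈ c.support, G.Adj x y → y = z ∨ y = u ∨ y = w) : ¬ PyramidFree G := by
  have hL := hc.four_le_length
  have hL0 : 0 < c.length := by omega
  obtain ⟨k, -, rfl⟩ := exists_cycVert_eq hL0 hz
  obtain ⟨p, hpL, rfl⟩ := exists_cycVert_add_eq hL0 k hu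
  obtain ⟨q, hqL, rfl⟩ := exists_cycVert_add_eq hL0 k hw
  have hp0 : p ≠ 0 := by rintro rfl; exact hzu rfl
  have hq0 : q ≠ 0 := by rintro rfl; exact hzw rfl
  wlog hpq : p < q generalizing p q
  · have hqp : q < p := by
      refine lt_of_le_of_ne (not_lt.1 hpq) fun h => ?_
      subst h
      exact huw.ne rfl
    refine this q hqL hw hxw hzw hzw' p hpL hu hxu hzu hzu' huw.symm (fun y hy hxy => ?_) hq0 hp0
      hqp
    rcases hN y hy hxy with h | h | h <;> simp [h]
  obtain rfl : q = p + 1 := by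
    have := hc.eq_add_one_of_adj_cycVert huw (by omega) (by omega)
    omega
  have hp1 : p ≠ 1 := by rintro rfl; exact hzu' (adj_cycVert_succ hL0 k)
  have hpL2 : p + 2 ≠ c.length := by
    intro h
    have := adj_cycVert_succ hL0 (k + (p + 1))
    rw [show k + (p + 1) + 1 = k + c.length by omega, cycVert_add_length] at this
    exact hzw' this.symm
  exact hc.not_pyramidFree_of_adj_cycVert hx (by omega) (by omega) hxz hxu hxw hN

theorem not_adj_of_card_neighbors_eq_three [DecidableEq V] [DecidableRel G.Adj]
    (hPyr : PyramidFree G) (hc : IsHoleCycle G c) (hx : x ∉ c.support) (hm : c.IsMajor x)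
    (hcard : #{u ∈ c.support.toFinset | G.Adj x u} = 3) {u w : V} (hu : u ∈ c.support)
    (hw : w ∈ c.support) (hxu : G.Adj x u) (hxw : G.Adj x w) (huw : u ≠ w) : ¬ G.Adj u w := by
  intro hadj
  have hmem {y : V} (hy : y ∈ c.support) (hxy : G.Adj x y) :
      y ∈ {u ∈ c.support.toFinset | G.Adj x u} := by
    simpa using ⟨hy, hxy⟩
  obtain ⟨z, hz, hzu, hzw, hN⟩ :=
    exists_third_of_card_eq_three hcard (hmem hu hxu) (hmem hw hxw) huw
  simp only [mem_filter, List.mem_toFinset] at hz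
  have hcov (y : V) (hy : y ∈ c.support) (hxy : G.Adj x y) : y = z ∨ y = u ∨ y = w := by
    rcases hN y (hmem hy hxy) with h | h | h <;> simp [h]
  have hedge {y y' : V} (hy : y ∈ c.support) (hy' : y' ∈ c.support) (h : G.Adj y y') :
      s(y, y') ∈ c.edges :=
    hc.isChordless.mem_edges hy hy' h
  by_cases hzu' : G.Adj z u
  · refine hm ⟨w, u, z, hedge hw hu hadj.symm, hedge hu hz.1 hzu'.symm, hzw.symm,
      fun y hy hxy => ?_⟩
    rcases hcov y hy hxy with h | h | h <;> simp [h]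
  by_cases hzw' : G.Adj z w
  · refine hm ⟨u, w, z, hedge hu hw hadj, hedge hw hz.1 hzw'.symm, hzu.symm, fun y hy hxy => ?_⟩
    rcases hcov y hy hxy with h | h | h <;> simp [h]
  exact hc.not_pyramidFree_of_adj_neighbors hx hz.1 hu hw hz.2 hxu hxw hadj hzu hzw hzu' hzw'
    hcov hPyr

end IsHoleCycle

theorem stmt_3 {V : Type} [Fintype V] [DecidableEq V] (G : SimpleGraph V)
    [DecidableRel G.Adj]
    (hdeg : ∀ v, G.degree v ≤ 4) (hEH : ¬ HasEvenHole G) (hPyr : PyramidFree G)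
    {v0 : V} (c : G.Walk v0 v0) (hc : IsHoleCycle G c)
    (x : V) (hx : x ∉ c.support)
    (hmajor : ¬ ∃ u1 u2 u3 : V, s(u1, u2) ∈ c.edges ∧ s(u2, u3) ∈ c.edges ∧ u1 ≠ u3 ∧
      ∀ u, u ∈ c.support → G.Adj x u → (u = u1 ∨ u = u2 ∨ u = u3)) :
    (c.support.toFinset.filter (fun u => G.Adj x u)).card = 3 ∧
    (∀ u w, u ∈ c.support → w ∈ c.support → G.Adj x u → G.Adj x w → u ≠ w →
      ¬ G.Adj u w) := by
  have hcard := hc.card_neighbors_eq_three (hdeg x) hEH hx hmajor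
  exact ⟨hcard, fun u w hu hw hxu hxw =>
    hc.not_adj_of_card_neighbors_eq_three hPyr hx hmajor hcard hu hw hxu hxw⟩
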